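/- For the radiation-dominated universe, a(t) = √t (so b(t) = t², σ∞(τ) = ∞), the following hold for all τ > 0 and σ ≥ 1: t(τ,σ) = τ/σ; χ(τ,σ) = 2√τ·arccos(1/√σ); ρ_τ(σ) = τ·( √(σ−1)/σ + arccos(1/√σ) ); and the proper radius of the Fermi space slice is ρ_{M_τ} = (π/2)·τ. Moreover the Fermi relative speed of a comoving test particle is v_F(σ₀) = √(σ₀−1)/σ₀ + ((σ₀−1)/σ₀)·arccos(1/√σ₀), which is strictly increasing in σ₀ with v_F(σ₀) → π/2 as σ₀ → ∞; in particular superluminal Fermi relative velocities (speeds exceeding 1) occur for σ₀ sufficiently large. -/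

import Mathlib

open Real MeasureTheory Filter Set intervalIntegral

noncomputable section

/-- Synchronous time along the orthogonal spacelike geodesic: t(τ,σ) = b(a(τ)/√σ). -/
def tF (a b : ℝ → ℝ) (τ σ : ℝ) : ℝ := b (a τ / Real.sqrt σ)

/-- Comoving coordinate along the orthogonal spacelike geodesic:
χ(τ,σ) = (1/2)∫₁^σ ḃ(a(τ)/√s) s^{-1/2}(s-1)^{-1/2} ds. -/
def chiF (a b : ℝ → ℝ) (τ σ : ℝ) : ℝ :=
  (1 / 2) * ∫ s in (1:ℝ)..σ, deriv b (a τ / Real.sqrt s) / (Real.sqrt s * Real.sqrt (s - 1))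

/-- Proper arc length along the orthogonal spacelike geodesic:
ρ_τ(σ) = (a(τ)/2)∫₁^σ ḃ(a(τ)/√s) s^{-3/2}(s-1)^{-1/2} ds. -/
def rhoF (a b : ℝ → ℝ) (τ σ : ℝ) : ℝ :=
  (a τ / 2) *
    ∫ s in (1:ℝ)..σ, deriv b (a τ / Real.sqrt s) / (s * Real.sqrt s * Real.sqrt (s - 1))

/-- The Fermi relative speed in the radiation-dominated universe (power-law α = 1/2):
v_F(σ₀) = ∫₁^{σ₀} σ^{-2}(σ-1)^{-1/2} dσ - (1/(2σ₀))∫₁^{σ₀} σ^{-1}(σ-1)^{-1/2} dσ. -/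
def vFrad (σ₀ : ℝ) : ℝ :=
  (∫ σ in (1:ℝ)..σ₀, 1 / (σ ^ 2 * Real.sqrt (σ - 1))) -
    (1 / (2 * σ₀)) * ∫ σ in (1:ℝ)..σ₀, 1 / (σ * Real.sqrt (σ - 1))

/-!
With `b(t) = t²` we have `ḃ(a(τ)/√s) = 2√τ/√s`, so the integrands of `χ`, `ρ_τ` and `v_F` are
multiples of `s⁻ⁿ (s - 1)^(-1/2)` for `n = 1, 2`. The substitution `u = √(s - 1)` gives them the
elementary primitives `2 arctan √(s - 1)` and `√(s - 1)/s + arctan √(s - 1)`, and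
`arctan √(σ - 1) = arccos (1/√σ)`. In the variable `u = √(σ₀ - 1)` the Fermi speed is
`(u + u² arctan u)/(1 + u²)`, whose derivative `(1 + 2u arctan u)/(1 + u²)²` is positive, and it
tends to `π/2 > 1`.
-/

open scoped Topology

lemma intervalIntegrable_one_div_pow_mul_sqrt_sub_one (n : ℕ) {σ : ℝ} (hσ : 1 ≤ σ) :
    IntervalIntegrable (fun s => 1 / (s ^ n * √(s - 1))) volume 1 σ := by
  have hsqrt : IntervalIntegrable (fun s : ℝ => (s - 1) ^ (-(1 / 2) : ℝ)) volume 1 σ := by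
    simpa using (intervalIntegrable_rpow' (by norm_num) (a := 0) (b := σ - 1)).comp_sub_right 1
  have hpow : ContinuousOn (fun s : ℝ => 1 / s ^ n) (uIcc 1 σ) := by
    refine continuousOn_const.div (by fun_prop) fun s hs => ?_
    rw [uIcc_of_le hσ] at hs
    exact pow_ne_zero _ (by linarith [hs.1])
  refine (hsqrt.continuousOn_mul hpow).congr fun s hs => ?_
  rw [uIoc_of_le hσ] at hs
  rw [sqrt_eq_rpow, rpow_neg (by linarith [hs.1])]
  field_simp

lemma hasDerivAt_sqrt_sub_one {x : ℝ} (hx : 1 < x) :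
    HasDerivAt (fun s => √(s - 1)) (1 / (2 * √(x - 1))) x := by
  simpa using ((hasDerivAt_id' x).sub_const 1).sqrt (by linarith)

lemma hasDerivAt_arctan_sqrt_sub_one {x : ℝ} (hx : 1 < x) :
    HasDerivAt (fun s => arctan √(s - 1)) (1 / (2 * x * √(x - 1))) x := by
  convert (hasDerivAt_sqrt_sub_one hx).arctan using 1
  rw [sq_sqrt (by linarith)]
  ring

lemma hasDerivAt_sqrt_sub_one_div_add_arctan {x : ℝ} (hx : 1 < x) :
    HasDerivAt (fun s => √(s - 1) / s + arctan √(s - 1)) (1 / (x ^ 2 * √(x - 1))) x := by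
  refine (((hasDerivAt_sqrt_sub_one hx).div (hasDerivAt_id' x) (by positivity)).add
    (hasDerivAt_arctan_sqrt_sub_one hx)).congr_deriv ?_
  have hx1 : 0 < √(x - 1) := sqrt_pos.2 (by linarith)
  have hsq : √(x - 1) ^ 2 = x - 1 := sq_sqrt (by linarith)
  field_simp
  linear_combination (-2) * hsq

lemma integral_one_div_mul_sqrt_sub_one {σ : ℝ} (hσ : 1 ≤ σ) :
    ∫ s in (1 : ℝ)..σ, 1 / (s * √(s - 1)) = 2 * arctan √(σ - 1) := by
  rw [integral_eq_sub_of_hasDerivAt_of_le hσ (f := fun s => 2 * arctan √(s - 1)) (by fun_prop)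
    (fun x hx => ((hasDerivAt_arctan_sqrt_sub_one hx.1).const_mul 2).congr_deriv (by
      have : 0 < √(x - 1) := sqrt_pos.2 (by linarith [hx.1])
      field_simp))
    (by simpa using intervalIntegrable_one_div_pow_mul_sqrt_sub_one 1 hσ)]
  simp

lemma integral_one_div_sq_mul_sqrt_sub_one {σ : ℝ} (hσ : 1 ≤ σ) :
    ∫ s in (1 : ℝ)..σ, 1 / (s ^ 2 * √(s - 1)) = √(σ - 1) / σ + arctan √(σ - 1) := by
  have hcont : ContinuousOn (fun s => √(s - 1) / s + arctan √(s - 1)) (Icc 1 σ) :=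
    ContinuousOn.add (by fun_prop (disch := intro s hs; linarith [hs.1])) (by fun_prop)
  rw [integral_eq_sub_of_hasDerivAt_of_le hσ hcont
    (fun x hx => hasDerivAt_sqrt_sub_one_div_add_arctan hx.1)
    (intervalIntegrable_one_div_pow_mul_sqrt_sub_one 2 hσ)]
  simp

lemma arctan_sqrt_sub_one {σ : ℝ} (hσ : 1 ≤ σ) : arctan √(σ - 1) = arccos (1 / √σ) := by
  rw [arctan_eq_arccos (sqrt_nonneg _), sq_sqrt (by linarith), add_sub_cancel, one_div]

lemma deriv_sq_div_sqrt (τ : ℝ) {s : ℝ} (hs : 0 < s) :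
    deriv (fun t => t ^ 2) (√τ / √s) / √s = 2 * √τ / s := by
  have : √s ≠ 0 := by positivity
  simp only [deriv_pow_field, Nat.cast_ofNat, Nat.add_one_sub_one, pow_one]
  field_simp
  rw [sq_sqrt hs.le]

lemma chiF_sqrt_sq (τ : ℝ) {σ : ℝ} (hσ : 1 ≤ σ) :
    chiF (fun t => √t) (fun t => t ^ 2) τ σ = 2 * √τ * arctan √(σ - 1) := by
  have hintegrand : EqOn (fun s => deriv (fun t => t ^ 2) (√τ / √s) / (√s * √(s - 1)))
      (fun s => 2 * √τ * (1 / (s * √(s - 1)))) (uIcc 1 σ) := fun s hs => by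
    rw [uIcc_of_le hσ] at hs
    simp only [← div_div, deriv_sq_div_sqrt τ (by linarith [hs.1] : 0 < s)]
    ring
  rw [chiF, integral_congr hintegrand, intervalIntegral.integral_const_mul,
    integral_one_div_mul_sqrt_sub_one hσ]
  ring

lemma rhoF_sqrt_sq {τ σ : ℝ} (hτ : 0 ≤ τ) (hσ : 1 ≤ σ) :
    rhoF (fun t => √t) (fun t => t ^ 2) τ σ = τ * (√(σ - 1) / σ + arctan √(σ - 1)) := by
  have hintegrand : EqOn (fun s => deriv (fun t => t ^ 2) (√τ / √s) / (s * √s * √(s - 1)))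
      (fun s => 2 * √τ * (1 / (s ^ 2 * √(s - 1)))) (uIcc 1 σ) := fun s hs => by
    rw [uIcc_of_le hσ] at hs
    simp only [mul_comm s, ← div_div, deriv_sq_div_sqrt τ (by linarith [hs.1] : 0 < s)]
    ring
  rw [rhoF, integral_congr hintegrand, intervalIntegral.integral_const_mul,
    integral_one_div_sq_mul_sqrt_sub_one hσ]
  linear_combination (√(σ - 1) / σ + arctan √(σ - 1)) * mul_self_sqrt hτ

lemma vFrad_eq {σ₀ : ℝ} (hσ₀ : 1 ≤ σ₀) :
    vFrad σ₀ = √(σ₀ - 1) / σ₀ + ((σ₀ - 1) / σ₀) * arctan √(σ₀ - 1) := by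
  have : σ₀ ≠ 0 := by positivity
  rw [vFrad, integral_one_div_mul_sqrt_sub_one hσ₀, integral_one_div_sq_mul_sqrt_sub_one hσ₀]
  field_simp
  ring

def fermiSpeedProfile (u : ℝ) : ℝ := (u + u ^ 2 * arctan u) / (1 + u ^ 2)

lemma vFrad_eq_fermiSpeedProfile {σ₀ : ℝ} (hσ₀ : 1 ≤ σ₀) :
    vFrad σ₀ = fermiSpeedProfile √(σ₀ - 1) := by
  have : σ₀ ≠ 0 := by positivity
  rw [vFrad_eq hσ₀, fermiSpeedProfile, sq_sqrt (by linarith), add_sub_cancel]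
  field_simp

lemma hasDerivAt_fermiSpeedProfile (u : ℝ) :
    HasDerivAt fermiSpeedProfile ((1 + 2 * u * arctan u) / (1 + u ^ 2) ^ 2) u := by
  have hnum : HasDerivAt (fun u => u + u ^ 2 * arctan u)
      (1 + (2 * u * arctan u + u ^ 2 * (1 / (1 + u ^ 2)))) u :=
    (hasDerivAt_id' u).add (by simpa using (hasDerivAt_pow 2 u).fun_mul (hasDerivAt_arctan u))
  have hden : HasDerivAt (fun u => 1 + u ^ 2) (2 * u) u := by
    simpa using (hasDerivAt_pow 2 u).const_add 1
  refine (hnum.div hden (by positivity)).congr_deriv ?_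
  field_simp
  ring

lemma mul_arctan_nonneg (u : ℝ) : 0 ≤ u * arctan u := by
  rcases le_total 0 u with hu | hu
  · exact mul_nonneg hu (arctan_nonneg.2 hu)
  · have : 0 ≤ arctan (-u) := arctan_nonneg.2 (neg_nonneg.2 hu)
    exact mul_nonneg_of_nonpos_of_nonpos hu (by linarith [arctan_neg u])

lemma strictMono_fermiSpeedProfile : StrictMono fermiSpeedProfile :=
  strictMono_of_hasDerivAt_pos hasDerivAt_fermiSpeedProfile fun u => by
    have := mul_arctan_nonneg u
    exact div_pos (by linarith) (by positivity)

lemma strictMonoOn_vFrad : StrictMonoOn vFrad (Ici 1) := fun a ha b hb hab => by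
  rw [vFrad_eq_fermiSpeedProfile ha, vFrad_eq_fermiSpeedProfile hb]
  exact strictMono_fermiSpeedProfile (sqrt_lt_sqrt (by linarith [mem_Ici.1 ha]) (by linarith))

lemma tendsto_arctan_sqrt_sub_one : Tendsto (fun σ => arctan √(σ - 1)) atTop (𝓝 (π / 2)) :=
  (tendsto_arctan_atTop.mono_right nhdsWithin_le_nhds).comp
    (tendsto_sqrt_atTop.comp (tendsto_atTop_add_const_right atTop (-1) tendsto_id))

lemma tendsto_sqrt_sub_one_div : Tendsto (fun σ => √(σ - 1) / σ) atTop (𝓝 0) := by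
  refine tendsto_of_tendsto_of_tendsto_of_le_of_le' tendsto_const_nhds
    tendsto_sqrt_atTop.inv_tendsto_atTop ?_ ?_
  · filter_upwards [eventually_ge_atTop 0] with σ hσ
    positivity
  · filter_upwards [eventually_ge_atTop 0] with σ hσ
    calc √(σ - 1) / σ ≤ √σ / σ := by gcongr; linarith
      _ = (√σ)⁻¹ := sqrt_div_self

lemma tendsto_rhoF_sqrt_sq {τ : ℝ} (hτ : 0 ≤ τ) :
    Tendsto (rhoF (fun t => √t) (fun t => t ^ 2) τ) atTop (𝓝 (π / 2 * τ)) := by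
  have hlim := (tendsto_sqrt_sub_one_div.add tendsto_arctan_sqrt_sub_one).const_mul τ
  rw [zero_add, mul_comm] at hlim
  refine hlim.congr' ?_
  filter_upwards [eventually_ge_atTop 1] with σ hσ
  exact (rhoF_sqrt_sq hτ hσ).symm

lemma tendsto_vFrad : Tendsto vFrad atTop (𝓝 (π / 2)) := by
  have hratio : Tendsto (fun σ : ℝ => (σ - 1) / σ) atTop (𝓝 1) := by
    have : Tendsto (fun σ : ℝ => 1 - σ⁻¹) atTop (𝓝 (1 - 0)) :=
      tendsto_const_nhds.sub tendsto_inv_atTop_zero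
    rw [sub_zero] at this
    refine this.congr' ?_
    filter_upwards [eventually_gt_atTop 0] with σ hσ
    field_simp
  have hlim := tendsto_sqrt_sub_one_div.add (hratio.mul tendsto_arctan_sqrt_sub_one)
  rw [zero_add, one_mul] at hlim
  refine hlim.congr' ?_
  filter_upwards [eventually_ge_atTop 1] with σ hσ
  exact (vFrad_eq hσ).symm

/-- the radiation-dominated universe a(t) = √t, b(t) = t²:
explicit formulas for t(τ,σ), χ(τ,σ), ρ_τ(σ), the proper radius ρ_{M_τ} = (π/2)τ, and
the Fermi relative speed, which is strictly increasing, tends to π/2, and is eventually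
superluminal (exceeds 1). -/
theorem radiation_dominated_universe (τ : ℝ) (hτ : 0 < τ) :
    (∀ σ : ℝ, 1 ≤ σ →
      -- t(τ,σ) = τ/σ
      tF (fun t => Real.sqrt t) (fun t => t ^ 2) τ σ = τ / σ ∧
      -- χ(τ,σ) = 2√τ·arccos(1/√σ)
      chiF (fun t => Real.sqrt t) (fun t => t ^ 2) τ σ =
        2 * Real.sqrt τ * Real.arccos (1 / Real.sqrt σ) ∧
      -- ρ_τ(σ) = τ·(√(σ-1)/σ + arccos(1/√σ))
      rhoF (fun t => Real.sqrt t) (fun t => t ^ 2) τ σ =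
        τ * (Real.sqrt (σ - 1) / σ + Real.arccos (1 / Real.sqrt σ))) ∧
    -- ρ_{M_τ} = lim_{σ→∞} ρ_τ(σ) = (π/2)·τ
    Tendsto (rhoF (fun t => Real.sqrt t) (fun t => t ^ 2) τ) atTop (nhds (π / 2 * τ)) ∧
    -- v_F(σ₀) = √(σ₀-1)/σ₀ + ((σ₀-1)/σ₀)·arccos(1/√σ₀)
    (∀ σ₀ : ℝ, 1 < σ₀ →
      vFrad σ₀ =
        Real.sqrt (σ₀ - 1) / σ₀ + ((σ₀ - 1) / σ₀) * Real.arccos (1 / Real.sqrt σ₀)) ∧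
    -- v_F is strictly increasing on (1,∞)
    StrictMonoOn vFrad (Set.Ioi 1) ∧
    -- v_F(σ₀) → π/2 as σ₀ → ∞
    Tendsto vFrad atTop (nhds (π / 2)) ∧
    -- superluminal Fermi speeds occur for σ₀ sufficiently large
    (∀ᶠ σ₀ in atTop, 1 < vFrad σ₀) := by
  have hπ : 1 < π / 2 := by linarith [pi_gt_three]
  refine ⟨fun σ hσ => ⟨?_, ?_, ?_⟩, tendsto_rhoF_sqrt_sq hτ.le, fun σ₀ hσ₀ => ?_,
    strictMonoOn_vFrad.mono Ioi_subset_Ici_self, tendsto_vFrad,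
    tendsto_vFrad.eventually_const_lt hπ⟩
  · rw [tF, div_pow, sq_sqrt hτ.le, sq_sqrt (by linarith)]
  · rw [chiF_sqrt_sq τ hσ, arctan_sqrt_sub_one hσ]
  · rw [rhoF_sqrt_sq hτ.le hσ, arctan_sqrt_sub_one hσ]
  · rw [vFrad_eq hσ₀.le, arctan_sqrt_sub_one hσ₀.le]
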